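/- Let (H, B) be a Rota–Baxter Hopf algebra of weight −1 and define B̃(x) = x₁ B(S(x₂)). Then for all x, y ∈ H the following identity holds: S(B(S(B̃(S(y₁))) B̃(x) B̃(S(y₂)))) · S(B(y₃)) = S(B(y B̃(x))). -/

import Mathlib

/-!
All computations take place in the convolution algebra of linear endomorphisms of `H`,
written `⋆`. For cocommutative `H` the antipode `S` is an involutive coalgebra map and
`S ∘ (f ⋆ g) = (S ∘ g) ⋆ (S ∘ f)`. The map `x ⊗ y ↦ B(x₁) y ξ(x₂)`, with `ξ = (S ∘ B) ⋆ id`, is a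
convolution product on `H ⊗ H`, and `Δ : H → H ⊗ H` is a coalgebra map; so the Rota–Baxter
identity reads `B ⋆ (B ∘ g) = B ∘ (B ⋆ g ⋆ ξ)`. As `B` is a coalgebra map, `B ⋆ (S ∘ B) = 1`,
and also `B̃ ∘ S = S ⋆ B` and `S ∘ B̃ ∘ S = ξ`. Multiplying by `c = B̃(x)` on the left (right) is
convolving with `ε(·) c` on the left (right), so the argument of `S ∘ B` on the left-hand side is
`B ⋆ ξ ⋆ (ε(·) c) ⋆ S ⋆ B ⋆ ξ = id ⋆ (ε(·) c) = (· * c)`.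
-/

open TensorProduct LinearMap

noncomputable section

universe u

variable {K H : Type u} [Field K] [CharZero K] [Ring H] [HopfAlgebra K H]

/-- The antipode of `H` as a `K`-linear map. -/
def aS (K H : Type u) [Field K] [Ring H] [HopfAlgebra K H] : H →ₗ[K] H :=
  HopfAlgebra.antipode K

/-- Convolution-type composite: `conv f g x = f x₁ * g x₂` in Sweedler notation,
where the source may be any coalgebra `C`. -/
def conv {C : Type u} [AddCommGroup C] [Module K C] [Coalgebra K C]
    (f g : C →ₗ[K] H) : C →ₗ[K] H :=
  LinearMap.mul' K H ∘ₗ TensorProduct.map f g ∘ₗ Coalgebra.comul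

/-- `wrap f g h (a ⊗ₜ c) = f a₁ * (g c * h a₂)` in Sweedler notation. -/
def wrap {C : Type u} [AddCommGroup C] [Module K C] [Coalgebra K C]
    (f : C →ₗ[K] H) (g : H →ₗ[K] H) (h : C →ₗ[K] H) : C ⊗[K] H →ₗ[K] H :=
  LinearMap.mul' K H ∘ₗ
    TensorProduct.map f
      (LinearMap.mul' K H ∘ₗ TensorProduct.map g h ∘ₗ (TensorProduct.comm K C H).toLinearMap) ∘ₗ
    (TensorProduct.assoc K C C H).toLinearMap ∘ₗ
    TensorProduct.map Coalgebra.comul LinearMap.id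

/-- The descendent product: `mulB B (x ⊗ₜ y) = B x₁ * (y * (S (B x₂) * x₃))`,
i.e. `x *_B y = B(x₁) y S(B(x₂)) x₃` in Sweedler notation. -/
def mulB (B : H →ₗ[K] H) : H ⊗[K] H →ₗ[K] H :=
  wrap B LinearMap.id (conv (aS K H ∘ₗ B) LinearMap.id)

/-- `Bt B x = x₁ * B (S x₂)`, i.e. the operator `B̃`. -/
def Bt (B : H →ₗ[K] H) : H →ₗ[K] H := conv LinearMap.id (B ∘ₗ aS K H)

/-- `SB B x = S(B x₁) * (S x₂ * B x₃)`, the antipode `S_B` of the descendent Hopf algebra. -/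
def SB (B : H →ₗ[K] H) : H →ₗ[K] H := conv (aS K H ∘ₗ B) (conv (aS K H) B)

/-- `H` is cocommutative. -/
def IsCocomm (K H : Type u) [Field K] [Ring H] [HopfAlgebra K H] : Prop :=
  ∀ x : H, (TensorProduct.comm K H H) (Coalgebra.comul x) = Coalgebra.comul x

/-- `B` is a Rota–Baxter operator of weight `-1` on `H`: it is a coalgebra map and
`B x * B y = B (B(x₁) y S(B(x₂)) x₃)` in Sweedler notation. -/
def IsRotaBaxter (B : H →ₗ[K] H) : Prop :=
  (Coalgebra.comul ∘ₗ B = TensorProduct.map B B ∘ₗ Coalgebra.comul) ∧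
  (Coalgebra.counit ∘ₗ B = Coalgebra.counit) ∧
  ∀ x y : H, B x * B y = B (mulB B (x ⊗ₜ[K] y))

open WithConv

namespace HopfAlgebra
variable {R A C : Type*} [CommSemiring R] [Semiring A] [HopfAlgebra R A]
  [AddCommMonoid C] [Module R C] [Coalgebra R C]

lemma antipode_comp_convMul [Coalgebra.IsCocomm R C] (f g : C →ₗ[R] A) :
    antipode R ∘ₗ (toConv f * toConv g).ofConv =
      (toConv (antipode R ∘ₗ g) * toConv (antipode R ∘ₗ f)).ofConv := by
  ext c
  simp only [LinearMap.comp_apply, LinearMap.convMul_apply]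
  conv_rhs => rw [← Coalgebra.comm_comul R c]
  induction Coalgebra.comul (R := R) c using TensorProduct.induction_on with
  | zero => simp
  | tmul a b => simp [antipode_mul_antidistrib]
  | add x y hx hy => simp only [map_add, hx, hy]

variable [Coalgebra.IsCocomm R A]

lemma antipode_comp_antipode : antipode R ∘ₗ antipode R = (LinearMap.id : A →ₗ[R] A) := by
  -- `(S ∘ S) ⋆ S = S ∘ (id ⋆ S) = 1`, so `S ∘ S` is the convolution inverse `id` of `S`.
  have h := antipode_comp_convMul (R := R) (LinearMap.id : A →ₗ[R] A) (antipode R)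
  rw [LinearMap.id_mul_antipode, LinearMap.comp_id] at h
  have hinv : toConv (antipode R ∘ₗ antipode R) * toConv (antipode R) =
      (1 : WithConv (A →ₗ[R] A)) := by
    rw [← toConv_ofConv (_ * _), ← h]
    ext
    simp [Algebra.algebraMap_eq_smul_one]
  exact congrArg ofConv (left_inv_eq_right_inv hinv LinearMap.antipode_mul_id)

lemma comul_comp_antipode :
    Coalgebra.comul ∘ₗ antipode R =
      map (antipode R) (antipode R) ∘ₗ (Coalgebra.comul : A →ₗ[R] A ⊗[R] A) := by
  -- `Δ` has right convolution inverse `Δ ∘ S` and, being a coalgebra map here, left inverse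
  -- `(S ⊗ S) ∘ Δ = ((S ⋆ id) ⊗ (S ⋆ id)) ∘ Δ`.
  have h := LinearMap.convMul_comp_coalgHom_distrib (toConv (map (antipode R) (antipode R)))
    (toConv (map LinearMap.id LinearMap.id)) (Coalgebra.comulCoalgHom R A)
  rw [map_convMul_map, LinearMap.antipode_mul_id] at h
  simp only [map_id, LinearMap.id_comp] at h
  have hunit : map (1 : WithConv (A →ₗ[R] A)).ofConv (1 : WithConv (A →ₗ[R] A)).ofConv =
      (1 : WithConv (A ⊗[R] A →ₗ[R] A ⊗[R] A)).ofConv := by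
    ext a b
    simp [Algebra.algebraMap_eq_smul_one, Algebra.TensorProduct.one_def, smul_tmul', mul_smul]
  have hinv : toConv (map (antipode R) (antipode R) ∘ₗ Coalgebra.comul) * toConv Coalgebra.comul =
      (1 : WithConv (A →ₗ[R] A ⊗[R] A)) := by
    refine WithConv.ext (h.symm.trans ?_)
    rw [hunit]
    ext
    simp
  exact (congrArg ofConv (left_inv_eq_right_inv hinv LinearMap.comul_right_inv)).symm

variable (R A) in
def antipodeCoalgHom : A →ₗc[R] A where
  toLinearMap := antipode R
  counit_comp := counit_comp_antipode
  map_comp_comul := comul_comp_antipode.symm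

end HopfAlgebra

namespace LinearMap
variable {R A C : Type*} [CommSemiring R] [Semiring A] [Algebra R A]
  [AddCommMonoid C] [Module R C] [Coalgebra R C]

lemma toConv_mulLeft_comp (c : A) (f : C →ₗ[R] A) :
    toConv (mulLeft R c ∘ₗ f) =
      toConv (toSpanSingleton R A c ∘ₗ Coalgebra.counit) * toConv f := by
  ext
  simp [convMul_def, ← map_comp_rTensor]

lemma toConv_mulRight_comp (c : A) (f : C →ₗ[R] A) :
    toConv (mulRight R c ∘ₗ f) =
      toConv f * toConv (toSpanSingleton R A c ∘ₗ Coalgebra.counit) := by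
  ext
  simp [convMul_def, ← map_comp_lTensor]

end LinearMap

section RotaBaxter
variable {K H : Type u} [Field K] [Ring H] [HopfAlgebra K H]

lemma conv_eq_convMul {C : Type u} [AddCommGroup C] [Module K C] [Coalgebra K C]
    (f g : C →ₗ[K] H) : conv f g = (toConv f * toConv g).ofConv :=
  rfl

lemma wrap_comp_map_id {C : Type u} [AddCommGroup C] [Module K C] [Coalgebra K C]
    (f : C →ₗ[K] H) (g : H →ₗ[K] H) (h : C →ₗ[K] H) :
    wrap f LinearMap.id h ∘ₗ map LinearMap.id g = wrap f g h := by
  refine TensorProduct.ext' fun a b => ?_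
  simp only [wrap, comp_apply, map_tmul]
  induction Coalgebra.comul (R := K) a using TensorProduct.induction_on with
  | zero => simp
  | tmul a₁ a₂ => simp
  | add x y hx hy => simp only [add_tmul, map_add, hx, hy]

lemma wrap_eq_convMul {C : Type u} [AddCommGroup C] [Module K C] [Coalgebra K C]
    (f : C →ₗ[K] H) (g : H →ₗ[K] H) (h : C →ₗ[K] H) :
    wrap f g h = (toConv (mul' K H ∘ₗ map f g) *
      toConv (h ∘ₗ (TensorProduct.rid K C).toLinearMap ∘ₗ lTensor C Coalgebra.counit)).ofConv := by
  refine TensorProduct.ext' fun a b => ?_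
  simp only [wrap, LinearMap.convMul_apply, comp_apply, map_tmul, TensorProduct.comul_tmul]
  induction Coalgebra.comul (R := K) a using TensorProduct.induction_on with
  | zero => simp
  | tmul a₁ a₂ =>
    -- write `b` as `(id ⊗ ε) (Δ b)`, so that both sides become sums over `Δ b`
    conv_lhs => rw [← (TensorProduct.rid K H).apply_symm_apply b, TensorProduct.rid_symm_apply,
      ← Coalgebra.lTensor_counit_comul (R := K) b]
    induction Coalgebra.comul (R := K) b using TensorProduct.induction_on with
    | zero => simp
    | tmul b₁ b₂ => simp [mul_assoc]
    | add x y hx hy => simp only [map_add, tmul_add, hx, hy]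
  | add x y hx hy => simp only [add_tmul, map_add, hx, hy]

theorem IsCocomm.coalgebraIsCocomm (hcc : IsCocomm K H) : Coalgebra.IsCocomm K H :=
  ⟨LinearMap.ext hcc⟩

lemma Bt_comp_antipode [Coalgebra.IsCocomm K H] (B : H →ₗ[K] H) :
    Bt B ∘ₗ aS K H = conv (aS K H) B :=
  calc Bt B ∘ₗ aS K H
      = (toConv (LinearMap.id ∘ₗ aS K H) * toConv (B ∘ₗ aS K H ∘ₗ aS K H)).ofConv :=
        LinearMap.convMul_comp_coalgHom_distrib (toConv LinearMap.id) (toConv (B ∘ₗ aS K H))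
          (HopfAlgebra.antipodeCoalgHom K H)
    _ = conv (aS K H) B := by
        rw [LinearMap.id_comp, aS, HopfAlgebra.antipode_comp_antipode, comp_id]
        rfl

lemma antipode_comp_Bt_comp_antipode [Coalgebra.IsCocomm K H] (B : H →ₗ[K] H) :
    aS K H ∘ₗ Bt B ∘ₗ aS K H = conv (aS K H ∘ₗ B) LinearMap.id := by
  rw [Bt_comp_antipode, conv_eq_convMul, aS, HopfAlgebra.antipode_comp_convMul,
    HopfAlgebra.antipode_comp_antipode]
  rfl

namespace IsRotaBaxter
variable {B : H →ₗ[K] H}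

def toCoalgHom (hB : IsRotaBaxter B) : H →ₗc[K] H where
  toLinearMap := B
  counit_comp := hB.2.1
  map_comp_comul := hB.1.symm

lemma toConv_mul_antipode_comp (hB : IsRotaBaxter B) :
    toConv B * toConv (aS K H ∘ₗ B) = 1 := by
  have h := LinearMap.convMul_comp_coalgHom_distrib (toConv LinearMap.id)
    (toConv (HopfAlgebra.antipode K)) hB.toCoalgHom
  rw [LinearMap.id_mul_antipode, LinearMap.convOne_comp_coalgHom] at h
  exact WithConv.ext h.symm

lemma mul'_comp_map_comp (hB : IsRotaBaxter B) (g : H →ₗ[K] H) :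
    mul' K H ∘ₗ map B (B ∘ₗ g) = B ∘ₗ wrap B g (conv (aS K H ∘ₗ B) LinearMap.id) := by
  refine TensorProduct.ext' fun a b => ?_
  rw [← wrap_comp_map_id]
  exact hB.2.2 a (g b)

lemma toConv_mul_toConv_comp [Coalgebra.IsCocomm K H] (hB : IsRotaBaxter B) (g : H →ₗ[K] H) :
    toConv B * toConv (B ∘ₗ g) = toConv (B ∘ₗ
      (toConv B * toConv g * (toConv (aS K H ∘ₗ B) * toConv LinearMap.id)).ofConv) := by
  set ξ := conv (aS K H ∘ₗ B) LinearMap.id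
  have hcounit : (TensorProduct.rid K H).toLinearMap ∘ₗ lTensor H Coalgebra.counit ∘ₗ
      Coalgebra.comul = LinearMap.id := by
    ext
    simp
  have h : wrap B g ξ ∘ₗ Coalgebra.comul = (toConv B * toConv g * toConv ξ).ofConv :=
    calc wrap B g ξ ∘ₗ Coalgebra.comul
        = (toConv (mul' K H ∘ₗ map B g ∘ₗ Coalgebra.comul) *
            toConv (ξ ∘ₗ (TensorProduct.rid K H).toLinearMap ∘ₗ lTensor H Coalgebra.counit ∘ₗ
              Coalgebra.comul)).ofConv := by
          rw [wrap_eq_convMul]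
          exact LinearMap.convMul_comp_coalgHom_distrib _ _ (Coalgebra.comulCoalgHom K H)
      _ = (toConv B * toConv g * toConv ξ).ofConv := by
          rw [hcounit, LinearMap.comp_id]
          rfl
  calc toConv B * toConv (B ∘ₗ g) = toConv ((mul' K H ∘ₗ map B (B ∘ₗ g)) ∘ₗ Coalgebra.comul) := rfl
    _ = toConv (B ∘ₗ wrap B g ξ ∘ₗ Coalgebra.comul) := by
      rw [mul'_comp_map_comp hB, comp_assoc]
    _ = _ := by
      rw [h]
      rfl

lemma toConv_mul_conv_Bt_mul [Coalgebra.IsCocomm K H] (hB : IsRotaBaxter B) (c : H) :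
    toConv B * toConv (conv (aS K H ∘ₗ Bt B ∘ₗ aS K H) (mulLeft K c ∘ₗ Bt B ∘ₗ aS K H)) *
      (toConv (aS K H ∘ₗ B) * toConv LinearMap.id) = toConv (mulRight K c) := by
  rw [antipode_comp_Bt_comp_antipode, Bt_comp_antipode, conv_eq_convMul _ (mulLeft K c ∘ₗ _),
    toConv_ofConv, LinearMap.toConv_mulLeft_comp, ← LinearMap.comp_id (mulRight K c),
    LinearMap.toConv_mulRight_comp]
  simp only [conv_eq_convMul, toConv_ofConv]
  have hcancel : ∀ x, toConv B * (toConv (aS K H ∘ₗ B) * x) = x := fun x => by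
    rw [← mul_assoc, hB.toConv_mul_antipode_comp, one_mul]
  simp only [mul_assoc, hcancel]
  rw [aS, LinearMap.antipode_mul_id, mul_one]

end IsRotaBaxter

end RotaBaxter

/-- `S(B(S(B̃(S(y₁))) B̃(x) B̃(S(y₂)))) · S(B(y₃)) = S(B(y B̃(x)))`. -/
theorem stmt14 (B : H →ₗ[K] H) (hcc : IsCocomm K H) (hB : IsRotaBaxter B) :
    ∀ x y : H,
      conv (aS K H ∘ₗ B ∘ₗ
          conv (aS K H ∘ₗ Bt B ∘ₗ aS K H) (LinearMap.mulLeft K (Bt B x) ∘ₗ Bt B ∘ₗ aS K H))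
        (aS K H ∘ₗ B) y = aS K H (B (y * Bt B x)) := by
  intro x y
  have := hcc.coalgebraIsCocomm
  set Φ := conv (aS K H ∘ₗ Bt B ∘ₗ aS K H) (LinearMap.mulLeft K (Bt B x) ∘ₗ Bt B ∘ₗ aS K H)
  calc conv (aS K H ∘ₗ B ∘ₗ Φ) (aS K H ∘ₗ B) y = (aS K H ∘ₗ conv B (B ∘ₗ Φ)) y := by
        rw [conv_eq_convMul, conv_eq_convMul, aS, HopfAlgebra.antipode_comp_convMul]
    _ = aS K H (B (y * Bt B x)) := by
        rw [conv_eq_convMul, hB.toConv_mul_toConv_comp, hB.toConv_mul_conv_Bt_mul]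
        rfl

end
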